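/- arXiv:1307.2924 — 6 statements merged into one kernel-verified Lean document; each statement's English description precedes it below -/
import Mathlib

section
/- For every finite group G and every x ∈ G, the order of the centralizer C_G(x) divides the cardinality of the solvabilizer sol_G(x). -/
/-!
It suffices to show that every `p`-subgroup `P ≤ C_G(x)` has order dividing `|sol_G(x)|`, which
we prove by induction on `|G|`. If `N = P ∩ Z(G)` is nontrivial, then `sol_G(x)` is the full
preimage of `sol_{G/N}(xN)`, because `⟨g, x⟩` is solvable iff its image modulo the abelian
subgroup `N` is; so `|sol_G(x)| = |N| |sol_{G/N}(xN)|` and `|P| = |N| |P/N|`, and we conclude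
from `G/N`. Otherwise `P` acts on `sol_G(x)` by conjugation and every `c ≠ 1` in `P` is
non-central, so its fixed points form `sol_{C_G(c)}(x)`, whose order is divisible by `|C_P(c)|`
by induction. In Burnside's lemma `∑_{c ∈ P} |Fix(c)| = |P| · #orbits`, the terms with `c ≠ 1`
grouped by conjugacy classes of `P` contribute multiples of `|P : C_P(c)| |C_P(c)| = |P|`, hence
`|P|` divides the remaining term `|Fix(1)| = |sol_G(x)|`.
-/

open Subgroup MulAction

theorem MonoidHom.map_closure_pair {G G' : Type*} [Group G] [Group G'] (f : G →* G') (a b : G) :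
    (closure {a, b}).map f = closure {f a, f b} := by
  rw [MonoidHom.map_closure, Set.image_pair]

theorem Subgroup.card_subgroupOf {G : Type*} [Group G] (H K : Subgroup G) :
    Nat.card (H.subgroupOf K) = Nat.card ↥(H ⊓ K) := by
  rw [← subgroupOf_map_subtype, card_map_of_injective K.subtype_injective]

theorem Subgroup.centralizer_singleton_eq_subgroupOf {G : Type*} [Group G] {P : Subgroup G}
    (c : P) : centralizer {c} = (centralizer {(c : G)}).subgroupOf P := by
  ext d
  simp [mem_subgroupOf, mem_centralizer_singleton_iff, Subtype.ext_iff]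

namespace Group

variable {G G' : Type*} [Group G] [Group G']

theorem isSolvable_ker_of_injective {f : G →* G'} (hf : Function.Injective f) :
    IsSolvable f.ker := by
  rw [f.ker_eq_bot hf]
  infer_instance

theorem isSolvable_map_iff_of_isSolvable_ker (f : G →* G') [IsSolvable f.ker] (H : Subgroup G) :
    IsSolvable (H.map f) ↔ IsSolvable H := by
  refine ⟨fun _ ↦ ?_, fun _ ↦ isSolvable_of_surjective (f.subgroupMap_surjective H)⟩
  let g := f.subgroupMap H
  have : IsSolvable g.ker := by
    let e : g.ker →* f.ker := (H.subtype.comp g.ker.subtype).codRestrict f.ker fun k ↦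
      congrArg Subtype.val (g.mem_ker.mp k.2)
    exact isSolvable_of_isSolvable_injective (f := e) fun a b h ↦
      Subtype.ext (Subtype.ext (congrArg (fun k : f.ker ↦ (k : G)) h))
  exact isSolvable_of_ker_le_range g.ker.subtype g (by simp)

end Group

namespace MulAction

theorem card_group_dvd_sum_of_card_stabilizer_dvd {H α : Type*} [Group H] [MulAction H α]
    [Finite H] [Fintype α] (f : α → ℕ) (hf : ∀ (h : H) a, f (h • a) = f a)
    (hdvd : ∀ a, Nat.card (stabilizer H a) ∣ f a) : Nat.card H ∣ ∑ a, f a := by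
  classical
  rw [← (selfEquivSigmaOrbits H α).symm.sum_comp, Fintype.sum_sigma]
  refine Finset.dvd_sum fun ω _ ↦ ?_
  change Nat.card H ∣ ∑ b : orbit H ω.out, f b
  have hconst : ∀ b : orbit H ω.out, f b = f ω.out := fun ⟨_, g, rfl⟩ ↦ hf g _
  rw [Fintype.sum_congr _ _ hconst, Finset.sum_const, Finset.card_univ, smul_eq_mul,
    ← Nat.card_eq_fintype_card, Nat.card_coe_set_eq, ← index_stabilizer,
    ← card_mul_index (stabilizer H ω.out), mul_comm]
  exact mul_dvd_mul_left _ (hdvd _)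

theorem card_fixedBy_conj {G α : Type*} [Group G] [MulAction G α] (g h : G) :
    Nat.card (fixedBy α (h * g * h⁻¹)) = Nat.card (fixedBy α g) := by
  rw [← smul_fixedBy, Nat.card_coe_set_eq, Nat.card_coe_set_eq, Set.ncard_smul_set]

theorem card_group_dvd_card_of_card_centralizer_dvd {P α : Type*} [Group P] [MulAction P α]
    [Finite P] [Finite α]
    (h : ∀ c : P, c ≠ 1 → Nat.card (centralizer {c}) ∣ Nat.card (fixedBy α c)) :
    Nat.card P ∣ Nat.card α := by
  classical
  have := Fintype.ofFinite P
  have := Fintype.ofFinite α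
  have hburnside : Nat.card P ∣ ∑ c : P, Nat.card (fixedBy α c) := by
    have := sum_card_fixedBy_eq_card_orbits_mul_card_group P α
    simp only [← Nat.card_eq_fintype_card] at this
    exact this ▸ dvd_mul_left _ _
  have hnontrivial : Nat.card P ∣ ∑ c ∈ Finset.univ.erase (1 : P), Nat.card (fixedBy α c) := by
    rw [← Finset.filter_ne', Finset.sum_filter]
    refine card_group_dvd_sum_of_card_stabilizer_dvd (H := ConjAct P) _ (fun g c ↦ ?_) fun c ↦ ?_
    · simp only [ConjAct.smul_def, ne_eq, mul_inv_eq_one, mul_eq_left, card_fixedBy_conj]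
    · split_ifs with hc
      · rw [ConjAct.stabilizer_eq_centralizer]
        exact h c hc
      · exact dvd_zero _
  rw [← Finset.add_sum_erase _ _ (Finset.mem_univ 1), fixedBy_one_eq_univ, Nat.card_univ]
    at hburnside
  exact (Nat.dvd_add_left hnontrivial).mp hburnside

end MulAction

section Solvabilizer

variable {G G' : Type*} [Group G] [Group G'] {x : G} {P : Subgroup G}

def solvabilizer (x : G) : Set G := {g | Group.IsSolvable (closure {g, x})}

theorem preimage_solvabilizer (f : G →* G') [Group.IsSolvable f.ker] (x : G) :
    f ⁻¹' solvabilizer (f x) = solvabilizer x := by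
  ext g
  change Group.IsSolvable (closure {f g, f x}) ↔ Group.IsSolvable (closure {g, x})
  rw [← f.map_closure_pair]
  exact Group.isSolvable_map_iff_of_isSolvable_ker f _

theorem conj_mem_solvabilizer_iff {c : G} (hc : Commute c x) (g : G) :
    c * g * c⁻¹ ∈ solvabilizer x ↔ g ∈ solvabilizer x := by
  let f := (MulAut.conj c).toMonoidHom
  have := Group.isSolvable_ker_of_injective (f := f) (MulAut.conj c).injective
  have hfx : f x = x := by simp [f, hc.eq]
  have := Set.ext_iff.mp (preimage_solvabilizer f x) g
  rwa [Set.mem_preimage, hfx] at this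

theorem commute_of_le_centralizer (hPx : P ≤ centralizer {x}) (c : P) : Commute (c : G) x :=
  mem_centralizer_singleton_iff.mp (hPx c.2)

theorem mem_centralizer_of_le_centralizer (hPx : P ≤ centralizer {x}) (c : P) :
    x ∈ centralizer {(c : G)} :=
  mem_centralizer_singleton_iff.mpr (commute_of_le_centralizer hPx c).symm

theorem subgroupOf_le_centralizer (hPx : P ≤ centralizer {x}) {K : Subgroup G} (hx : x ∈ K) :
    P.subgroupOf K ≤ centralizer {⟨x, hx⟩} := fun _ hq ↦
  mem_centralizer_singleton_iff.mpr (Subtype.ext (mem_centralizer_singleton_iff.mp (hPx hq)))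

abbrev solvabilizerConjAction (hPx : P ≤ centralizer {x}) : MulAction P (solvabilizer x) where
  smul c s := ⟨c * s * (c : G)⁻¹,
    (conj_mem_solvabilizer_iff (commute_of_le_centralizer hPx c) s).2 s.2⟩
  one_smul s := Subtype.ext <| by
    change ((1 : P) : G) * s * ((1 : P) : G)⁻¹ = s
    simp
  mul_smul c d s := Subtype.ext <| by
    change ((c * d : P) : G) * s * ((c * d : P) : G)⁻¹ = c * (d * s * (d : G)⁻¹) * (c : G)⁻¹
    simp [mul_assoc]

theorem mem_fixedBy_solvabilizerConjAction_iff (hPx : P ≤ centralizer {x}) (c : P)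
    (s : solvabilizer x) :
    letI := solvabilizerConjAction hPx
    s ∈ fixedBy (solvabilizer x) c ↔ (s : G) ∈ centralizer {(c : G)} := by
  rw [mem_centralizer_singleton_iff, eq_comm, ← mul_inv_eq_iff_eq_mul]
  exact Subtype.ext_iff

theorem card_fixedBy_solvabilizerConjAction (hPx : P ≤ centralizer {x}) (c : P) :
    letI := solvabilizerConjAction hPx
    Nat.card (fixedBy (solvabilizer x) c) =
      Nat.card (solvabilizer (⟨x, mem_centralizer_of_le_centralizer hPx c⟩ :
        centralizer {(c : G)})) := by
  let K := centralizer {(c : G)}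
  have := Group.isSolvable_ker_of_injective K.subtype_injective
  rw [← preimage_solvabilizer K.subtype]
  have hmem := mem_fixedBy_solvabilizerConjAction_iff hPx c
  exact Nat.card_congr
    { toFun s := ⟨⟨s.1, (hmem s.1).1 s.2⟩, s.1.2⟩
      invFun k := ⟨⟨k.1, k.2⟩, (hmem _).2 k.1.2⟩ }

theorem card_dvd_card_solvabilizer_of_forall_centralizer [Finite G] (hPx : P ≤ centralizer {x})
    (h : ∀ c : P, c ≠ 1 → Nat.card (P.subgroupOf (centralizer {(c : G)})) ∣
      Nat.card (solvabilizer (⟨x, mem_centralizer_of_le_centralizer hPx c⟩ :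
        centralizer {(c : G)}))) :
    Nat.card P ∣ Nat.card (solvabilizer x) := by
  let := solvabilizerConjAction hPx
  refine card_group_dvd_card_of_card_centralizer_dvd fun c hc ↦ ?_
  rw [centralizer_singleton_eq_subgroupOf, card_subgroupOf, inf_comm, ← card_subgroupOf,
    card_fixedBy_solvabilizerConjAction]
  exact h c hc

theorem card_dvd_card_solvabilizer_of_quotient (N : Subgroup G) [N.Normal]
    [Group.IsSolvable N] (hNP : N ≤ P)
    (h : Nat.card (P.map (QuotientGroup.mk' N)) ∣ Nat.card (solvabilizer (x : G ⧸ N))) :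
    Nat.card P ∣ Nat.card (solvabilizer x) := by
  have : Group.IsSolvable (QuotientGroup.mk' N).ker := by rwa [QuotientGroup.ker_mk']
  have hcardP : Nat.card P = Nat.card N * Nat.card (P.map (QuotientGroup.mk' N)) := by
    rw [← relIndex_ker, QuotientGroup.ker_mk', ← relIndex_bot_left, ← relIndex_bot_left,
      relIndex_mul_relIndex _ _ _ bot_le hNP]
  rw [← preimage_solvabilizer (QuotientGroup.mk' N), QuotientGroup.coe_mk',
    QuotientGroup.card_preimage_mk, hcardP]
  exact mul_dvd_mul_left _ h

theorem card_dvd_card_solvabilizer_of_isPGroup {p : ℕ} [Finite G] (hP : IsPGroup p P)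
    (hPx : P ≤ centralizer {x}) :
    Nat.card P ∣ Nat.card (solvabilizer x) := by
  induction hn : Nat.card G using Nat.strong_induction_on generalizing G with
  | _ n ih =>
  subst hn
  by_cases hPZ : P ⊓ center G = ⊥
  · refine card_dvd_card_solvabilizer_of_forall_centralizer hPx fun c hc ↦ ?_
    have hcZ : (c : G) ∉ center G := fun hcZ ↦ hc <| Subtype.ext <|
      (mem_bot.mp (hPZ ▸ mem_inf.mpr ⟨c.2, hcZ⟩) :)
    have hlt : Nat.card (centralizer {(c : G)}) < Nat.card G :=
      card_le_card_group _ |>.lt_of_ne fun h ↦ hcZ <| Set.singleton_subset_iff.mp <|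
        centralizer_eq_top_iff_subset.mp (card_eq_iff_eq_top _ |>.mp h)
    exact ih _ hlt hP.comap_subtype (subgroupOf_le_centralizer hPx _) rfl
  · let N := P ⊓ center G
    have hNZ : N ≤ center G := inf_le_right
    have : N.Normal := ⟨fun n hn g ↦ by rwa [mem_center_iff.mp (hNZ hn) g, mul_inv_cancel_right]⟩
    have : Group.IsSolvable N := Group.isSolvable_of_comm fun a b ↦
      Subtype.ext (mem_center_iff.mp (hNZ b.2) a)
    refine card_dvd_card_solvabilizer_of_quotient N inf_le_left ?_
    have hlt : Nat.card (G ⧸ N) < Nat.card G := by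
      rw [card_eq_card_quotient_mul_card_subgroup N]
      exact lt_mul_of_one_lt_right Nat.card_pos ((one_lt_card_iff_ne_bot N).mpr hPZ)
    refine ih _ hlt (hP.map _) ((map_mono hPx).trans ?_) rfl
    rw [← Set.image_singleton]
    exact map_centralizer_le_centralizer_image _ _

end Solvabilizer

/-- For every finite group `G` and every `x ∈ G`, the order of the centralizer
`C_G(x)` divides the cardinality of the solvabilizer `sol_G(x)`. -/
theorem card_centralizer_dvd_card_solvabilizer (G : Type*) [Group G] [Finite G] (x : G) :
    Nat.card (Subgroup.centralizer ({x} : Set G)) ∣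
      Nat.card {g : G | IsSolvable ↥(Subgroup.closure ({g, x} : Set G))} := by
  refine (Nat.dvd_iff_prime_pow_dvd_dvd _ _).mpr fun p k hp hdvd ↦ ?_
  have : Fact p.Prime := ⟨hp⟩
  obtain ⟨Q, hQ⟩ := Sylow.exists_subgroup_card_pow_prime p hdvd
  have := card_dvd_card_solvabilizer_of_isPGroup ((IsPGroup.of_card hQ).map _)
    (map_subtype_le Q)
  rwa [card_map_of_injective (subtype_injective _), hQ] at this
end

section
/- For every finite group G, the order |G| divides the sum over all x ∈ G of the cardinalities |sol_G(x)|. -/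
/-!
The sum counts the pairs `(g, x)` generating a solvable subgroup; `|G|` divides their number by
induction on `|G|`.

If the centre `Z` is nontrivial, then, `Z` being solvable, `⟨g, x⟩` is solvable iff its image in
`G ⧸ Z` is, so there are `|Z|²` times as many solvable pairs in `G` as in `G ⧸ Z`.

If the centre is trivial, let `G` act on the solvable pairs by conjugation. By Burnside's lemma
`|G|` divides `∑ₜ |Fix t|`, and `Fix t` consists of the solvable pairs of the centralizer `C(t)`,
a proper subgroup when `t ≠ 1`. The class of such a `t` contributes `|G : C(t)| · |Fix t|`, a
multiple of `|G|` by induction. What remains is the term `t = 1`: the number of solvable pairs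
of `G`.
-/

open Subgroup MulAction

section

variable {G G' : Type*} [Group G] [Group G']

theorem Group.isSolvable_of_isSolvable_ker_of_isSolvable_range (f : G →* G')
    [Group.IsSolvable f.ker] [Group.IsSolvable f.range] : Group.IsSolvable G :=
  Group.isSolvable_of_ker_le_range f.ker.subtype f.rangeRestrict (by simp)

theorem Group.isSolvable_ker_of_injective_s2 {f : G →* G'} (hf : Function.Injective f) :
    Group.IsSolvable f.ker := by
  have : Subsingleton f.ker := by
    rw [f.ker_eq_bot_iff.mpr hf]
    infer_instance
  infer_instance

theorem Subgroup.isSolvable_map_iff {f : G →* G'} (hf : Group.IsSolvable f.ker)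
    (H : Subgroup G) : Group.IsSolvable (H.map f) ↔ Group.IsSolvable H := by
  refine ⟨fun _ ↦ ?_, fun _ ↦ Group.isSolvable_of_surjective (f.subgroupMap_surjective H)⟩
  have : Group.IsSolvable (f.subgroupMap H).ker := by
    rw [ker_subgroupMap]
    exact Group.isSolvable_of_isSolvable_injective (f := H.subtype.subgroupComap f.ker)
      fun x y h ↦ Subtype.ext (Subtype.ext congr($h.1))
  exact Group.isSolvable_of_isSolvable_ker_of_isSolvable_range (f.subgroupMap H)

theorem Subgroup.isSolvable_closure_pair_map_iff {f : G →* G'} (hf : Group.IsSolvable f.ker)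
    (g x : G) :
    Group.IsSolvable (closure {f g, f x}) ↔ Group.IsSolvable (closure {g, x}) := by
  rw [← Set.image_pair, ← MonoidHom.map_closure, isSolvable_map_iff hf]

variable (G) in
def solvablePairs : SubMulAction (ConjAct G) (G × G) where
  carrier := {p | Group.IsSolvable (closure {p.1, p.2})}
  smul_mem' c p := (isSolvable_closure_pair_map_iff
    (f := (MulDistribMulAction.toMulAut _ G c).toMonoidHom)
    (Group.isSolvable_ker_of_injective_s2 (MulEquiv.injective _)) p.1 p.2).mpr

def solvablePairsEquivOfSubgroup (H : Subgroup G) :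
    solvablePairs H ≃ {p : solvablePairs G // p.1.1 ∈ H ∧ p.1.2 ∈ H} where
  toFun p := ⟨⟨(p.1.1, p.1.2), (isSolvable_closure_pair_map_iff
    (Group.isSolvable_ker_of_injective_s2 H.subtype_injective) _ _).mpr p.2⟩, p.1.1.2, p.1.2.2⟩
  invFun p := ⟨(⟨p.1.1.1, p.2.1⟩, ⟨p.1.1.2, p.2.2⟩), (isSolvable_closure_pair_map_iff
    (Group.isSolvable_ker_of_injective_s2 H.subtype_injective)
    (⟨p.1.1.1, p.2.1⟩ : H) ⟨p.1.1.2, p.2.2⟩).mp p.1.2⟩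
  left_inv _ := rfl
  right_inv _ := rfl

theorem card_solvablePairs_eq_of_isSolvable_normal (N : Subgroup G) [N.Normal]
    (hN : Group.IsSolvable N) :
    Nat.card (solvablePairs G) = Nat.card N ^ 2 * Nat.card (solvablePairs (G ⧸ N)) := by
  have hker : Group.IsSolvable (QuotientGroup.mk' N).ker := by rwa [QuotientGroup.ker_mk']
  have hpreimage : (solvablePairs G : Set (G × G)) = QuotientGroup.mk ⁻¹'
      (QuotientGroup.prodEquiv N N ⁻¹' solvablePairs (G ⧸ N)) := by
    ext p
    exact (isSolvable_closure_pair_map_iff hker p.1 p.2).symm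
  rw [← SetLike.coe_sort_coe, hpreimage, QuotientGroup.card_preimage_mk,
    Nat.card_preimage_of_injective (QuotientGroup.prodEquiv N N).injective (by simp),
    Nat.card_congr (N.prodEquiv N).toEquiv, Nat.card_prod, sq]
  rfl

theorem MulAction.card_dvd_sum_card_fixedBy {A X : Type*} [Group A] [MulAction A X] [Fintype A]
    [Finite X] : Nat.card A ∣ ∑ a : A, Nat.card (fixedBy X a) := by
  classical
  have := Fintype.ofFinite X
  have := Fintype.ofFinite (orbitRel.Quotient A X)
  simp only [Nat.card_eq_fintype_card]
  rw [sum_card_fixedBy_eq_card_orbits_mul_card_group]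
  exact dvd_mul_left _ _

theorem MulAction.card_fixedBy_conj_s2 {A X : Type*} [Group A] [MulAction A X] (a g : A) :
    Nat.card (fixedBy X (a * g * a⁻¹)) = Nat.card (fixedBy X g) := by
  rw [← smul_fixedBy, Nat.card_coe_set_eq, Set.ncard_smul_set, Nat.card_coe_set_eq]

theorem MulAction.card_dvd_sum_of_card_stabilizer_dvd {A X : Type*} [Group A] [MulAction A X]
    [Fintype X] (f : X → ℕ) (hf : ∀ (a : A) x, f (a • x) = f x)
    (hdvd : ∀ x, Nat.card (stabilizer A x) ∣ f x) : Nat.card A ∣ ∑ x, f x := by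
  classical
  have := Fintype.ofFinite (orbitRel.Quotient A X)
  have hconst (ω : orbitRel.Quotient A X) (y : orbit A ω.out) : f y = f ω.out := by
    obtain ⟨a, ha⟩ := y.2
    rw [← ha, hf]
  rw [← (selfEquivSigmaOrbits A X).symm.sum_comp, Fintype.sum_sigma]
  refine Finset.dvd_sum fun ω _ ↦ ?_
  have hsymm (y : orbit A ω.out) : (selfEquivSigmaOrbits A X).symm ⟨ω, y⟩ = y := rfl
  simp only [hsymm, hconst, Finset.sum_const, Finset.card_univ, smul_eq_mul,
    ← Nat.card_eq_fintype_card, Nat.card_coe_set_eq, ← index_stabilizer]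
  rw [← index_mul_card (stabilizer A ω.out)]
  exact mul_dvd_mul_left _ (hdvd _)

theorem ConjAct.toConjAct_smul_eq_self_iff {t g : G} :
    ConjAct.toConjAct t • g = g ↔ g ∈ centralizer {t} := by
  rw [mem_centralizer_singleton_iff, ConjAct.toConjAct_smul, mul_inv_eq_iff_eq_mul, eq_comm]

theorem card_fixedBy_solvablePairs (t : G) :
    Nat.card (fixedBy (solvablePairs G) (ConjAct.toConjAct t)) =
      Nat.card (solvablePairs (centralizer {t})) := by
  rw [Nat.card_congr (solvablePairsEquivOfSubgroup _)]
  refine Nat.card_congr (Equiv.subtypeEquivRight fun p ↦ ?_)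
  simp only [mem_fixedBy, Subtype.ext_iff, SubMulAction.val_smul, Prod.ext_iff, Prod.smul_fst,
    Prod.smul_snd, ConjAct.toConjAct_smul_eq_self_iff]

theorem card_dvd_card_solvablePairs_of_forall_ne_one [Finite G]
    (h : ∀ t : G, t ≠ 1 →
      Nat.card (centralizer {t}) ∣ Nat.card (solvablePairs (centralizer {t}))) :
    Nat.card G ∣ Nat.card (solvablePairs G) := by
  classical
  have := Fintype.ofFinite G
  let F (t : G) : ℕ := Nat.card (fixedBy (solvablePairs G) (ConjAct.toConjAct t))
  have hburnside : Nat.card G ∣ ∑ t, F t :=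
    card_dvd_sum_card_fixedBy (A := ConjAct G) (X := solvablePairs G)
  have hnontrivial : Nat.card G ∣ ∑ t, if t = 1 then 0 else F t := by
    refine card_dvd_sum_of_card_stabilizer_dvd (A := ConjAct G) _ (fun a t ↦ ?_) fun t ↦ ?_
    · simp only [F, ConjAct.smul_def, conj_eq_one_iff, map_mul, map_inv,
        ConjAct.toConjAct_ofConjAct, card_fixedBy_conj_s2]
    · split_ifs with ht
      · exact dvd_zero _
      · rw [← nat_card_centralizer_nat_card_stabilizer,
          show F t = _ from card_fixedBy_solvablePairs t]
        exact h t ht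
  have hsplit : ∑ t, F t = F 1 + ∑ t, if t = 1 then 0 else F t := by
    rw [← Finset.add_sum_erase _ _ (Finset.mem_univ 1), Finset.sum_ite]
    simp [Finset.filter_ne']
  have hF1 : F 1 = Nat.card (solvablePairs G) := by
    simp [F]
  rw [hsplit, hF1] at hburnside
  exact (Nat.dvd_add_left hnontrivial).mp hburnside

end

theorem card_dvd_card_solvablePairs (G : Type*) [Group G] [Finite G] :
    Nat.card G ∣ Nat.card (solvablePairs G) := by
  induction hn : Nat.card G using Nat.strong_induction_on generalizing G with
  | _ n ih =>
  subst hn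
  by_cases hZ : center G = ⊥
  · refine card_dvd_card_solvablePairs_of_forall_ne_one fun t ht ↦ ih _ ?_ _ rfl
    have hne : centralizer {t} ≠ ⊤ := by
      rw [Ne, centralizer_eq_top_iff_subset, Set.singleton_subset_iff, hZ]
      exact ht
    exact (card_le_card_group _).lt_of_ne (mt (eq_top_of_card_eq _) hne)
  · have hZsolv : Group.IsSolvable (center G) :=
      Group.isSolvable_of_comm fun a b ↦ Subtype.ext (mem_center_iff.mp b.2 a)
    have hcard := card_eq_card_quotient_mul_card_subgroup (center G)
    have hlt : Nat.card (G ⧸ center G) < Nat.card G := by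
      rw [hcard]
      exact lt_mul_of_one_lt_right Nat.card_pos ((one_lt_card_iff_ne_bot _).mpr hZ)
    rw [card_solvablePairs_eq_of_isSolvable_normal _ hZsolv, hcard, sq, mul_comm, mul_assoc]
    exact mul_dvd_mul_left _ (dvd_mul_of_dvd_right (ih _ hlt _ rfl) _)

/-- For every finite group `G`, the order `|G|` divides the sum over all `x ∈ G` of
the cardinalities `|sol_G(x)|`. -/
theorem card_dvd_sum_card_solvabilizers (G : Type*) [Group G] [Fintype G] :
    Fintype.card G ∣
      ∑ x : G, Nat.card {g : G | IsSolvable ↥(Subgroup.closure ({g, x} : Set G))} := by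
  rw [← Nat.card_eq_fintype_card, ← Nat.card_sigma]
  refine (card_dvd_card_solvablePairs G).trans (Nat.card_congr ?_).dvd
  exact ((Equiv.prodComm G G).subtypeEquiv fun _ ↦ Iff.rfl).trans
    (Equiv.subtypeProdEquivSigmaSubtype fun x g ↦ Group.IsSolvable (Subgroup.closure {g, x}))
end

section
/- Let G be a finite group and N a solvable normal subgroup of G. For every x ∈ G, the solvabilizer of the coset xN in the quotient G/N equals the image of sol_G(x) under the quotient map; that is, {gN ∈ G/N : ⟨gN, xN⟩ is solvable} = {gN : g ∈ sol_G(x)}. -/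
/-!
Solvability is closed under subgroups, quotients and extensions. Hence, for a homomorphism `f`
with solvable kernel, a subgroup `K` is solvable iff its image `f(K)`: the restriction
`K → f(K)` is surjective and its kernel embeds in `ker f`. Apply this to the quotient map
`G → G/N` and `K = ⟨g, x⟩`, whose image is `⟨gN, xN⟩`.
-/

namespace Subgroup

variable {G G' : Type*} [Group G] [Group G']

theorem isSolvable_map_iff_of_isSolvable_ker (f : G →* G') [Group.IsSolvable f.ker]
    (K : Subgroup G) : Group.IsSolvable (K.map f) ↔ Group.IsSolvable K := by
  constructor
  · intro hmap
    have : Group.IsSolvable (f.ker.subgroupOf K) :=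
      Group.isSolvable_of_isSolvable_injective (f := K.subtype.subgroupComap f.ker)
        fun a b hab => Subtype.ext (Subtype.ext (congrArg (fun y : f.ker => (y : G)) hab))
    refine Group.isSolvable_of_ker_le_range (f.ker.subgroupOf K).subtype (f.subgroupMap K) ?_
    intro k hk
    have hk' : f k = 1 := congrArg Subtype.val (MonoidHom.mem_ker.mp hk)
    exact ⟨⟨k, hk'⟩, rfl⟩
  · intro _
    exact Group.isSolvable_of_surjective (f.subgroupMap_surjective K)

theorem map_closure_pair (f : G →* G') (g x : G) :
    (closure {g, x}).map f = closure {f g, f x} := by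
  rw [MonoidHom.map_closure, Set.image_pair]

end Subgroup

theorem solvabilizer_quotient_eq_image_general (G : Type*) [Group G]
    (N : Subgroup G) [N.Normal] (hN : IsSolvable N) (x : G) :
    {q : G ⧸ N | IsSolvable ↥(Subgroup.closure ({q, (x : G ⧸ N)} : Set (G ⧸ N)))} =
      (QuotientGroup.mk : G → G ⧸ N) ''
        {g : G | IsSolvable ↥(Subgroup.closure ({g, x} : Set G))} := by
  have : Group.IsSolvable (QuotientGroup.mk' N).ker := by
    rwa [QuotientGroup.ker_mk']
  have hpreimage :
      (QuotientGroup.mk : G → G ⧸ N) ⁻¹'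
          {q : G ⧸ N | Group.IsSolvable (Subgroup.closure {q, (x : G ⧸ N)})} =
        {g : G | Group.IsSolvable (Subgroup.closure {g, x})} := by
    ext g
    rw [Set.mem_preimage, Set.mem_ofPred, Set.mem_ofPred, ← QuotientGroup.mk'_apply,
      ← QuotientGroup.mk'_apply, ← Subgroup.map_closure_pair,
      Subgroup.isSolvable_map_iff_of_isSolvable_ker]
  -- `IsSolvable` is an alias of `Group.IsSolvable`, equal only up to unfolding: `rw` would fail.
  exact (Set.image_preimage_eq _ QuotientGroup.mk_surjective).symm.trans (congrArg _ hpreimage)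

/-- Let `G` be a finite group and `N` a solvable normal subgroup of `G`. For every
`x ∈ G`, the solvabilizer of the coset `xN` in `G/N` equals the image of `sol_G(x)`
under the quotient map. -/
theorem solvabilizer_quotient_eq_image (G : Type*) [Group G] [Finite G]
    (N : Subgroup G) [N.Normal] (hN : IsSolvable N) (x : G) :
    {q : G ⧸ N | IsSolvable ↥(Subgroup.closure ({q, (x : G ⧸ N)} : Set (G ⧸ N)))} =
      (QuotientGroup.mk : G → G ⧸ N) ''
        {g : G | IsSolvable ↥(Subgroup.closure ({g, x} : Set G))} :=
  solvabilizer_quotient_eq_image_general G N hN x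
end

section
/- Let G be a finite group. For every x ∈ G, the order O(x) of the element x divides the cardinality |sol_G(x)|. -/
/-! Since `⟨g * x ^ k, x⟩ = ⟨g, x⟩`, the solvabilizer of `x` is a union of left cosets of `⟨x⟩`,
so its cardinality is a multiple of `|⟨x⟩| = O(x)`. -/

theorem Subgroup.closure_pair_mul_of_mem_zpowers {G : Type*} [Group G] {g h x : G}
    (hh : h ∈ zpowers x) : closure ({g * h, x} : Set G) = closure {g, x} := by
  have hx : ∀ {y : G}, x ∈ closure ({y, x} : Set G) := subset_closure (by simp)
  have hh' : ∀ {y : G}, h ∈ closure ({y, x} : Set G) := zpowers_le.mpr hx hh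
  apply le_antisymm <;> rw [closure_le, Set.insert_subset_iff, Set.singleton_subset_iff]
  · exact ⟨mul_mem (subset_closure (by simp)) hh', hx⟩
  · refine ⟨?_, hx⟩
    simpa using mul_mem (subset_closure (by simp) : g * h ∈ closure ({g * h, x} : Set G))
      (inv_mem hh')

theorem Subgroup.card_dvd_card_of_mul_mem {G : Type*} [Group G] (H : Subgroup G) (s : Set G)
    (hs : ∀ g ∈ s, ∀ h ∈ H, g * h ∈ s) : Nat.card H ∣ Nat.card s := by
  have hs_eq : QuotientGroup.mk ⁻¹' ((QuotientGroup.mk : G → G ⧸ H) '' s) = s := by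
    rw [QuotientGroup.preimage_image_mk_eq_mul]
    refine (Set.mul_subset_iff.mpr hs).antisymm fun g hg => ?_
    exact ⟨g, hg, 1, H.one_mem, mul_one g⟩
  rw [← hs_eq, QuotientGroup.card_preimage_mk]
  exact dvd_mul_right _ _

theorem orderOf_dvd_card_solvabilizer_general (G : Type*) [Group G] (x : G) :
    orderOf x ∣ Nat.card {g : G | IsSolvable ↥(Subgroup.closure ({g, x} : Set G))} := by
  rw [← Nat.card_zpowers]
  refine Subgroup.card_dvd_card_of_mul_mem _ _ fun g hg h hh => ?_
  rwa [Set.mem_ofPred_eq, Subgroup.closure_pair_mul_of_mem_zpowers hh]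

/-- Let `G` be a finite group. For every `x ∈ G`, the order of `x` divides the
cardinality `|sol_G(x)|`. -/
theorem orderOf_dvd_card_solvabilizer (G : Type*) [Group G] [Finite G] (x : G) :
    orderOf x ∣ Nat.card {g : G | IsSolvable ↥(Subgroup.closure ({g, x} : Set G))} :=
  orderOf_dvd_card_solvabilizer_general G x
end

section
/- Let G be a finite group and x ∈ G with x ∉ Sol(G). Then the order O(x) of x is strictly less than deg(x), the number of elements y ∈ G such that ⟨x,y⟩ is not solvable. -/
/-!
The non-solvable neighbours of `x` are stable under multiplication by powers of `x` on either
side, because `⟨x, xⁱ y xʲ⟩ = ⟨x, y⟩`. Hence together with one neighbour `y` they contain the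
whole coset `⟨x⟩y`, which has `O(x)` elements. If there were no others, the double coset
`⟨x⟩y⟨x⟩` would collapse to `⟨x⟩y`, so `y` would normalize `⟨x⟩`; but then `⟨x, y⟩` is an
extension of the cyclic group `⟨x⟩` by a cyclic group, hence solvable.
-/

open Subgroup

section

variable {G : Type*} [Group G]

theorem isSolvable_of_isMulCommutative [IsMulCommutative G] : Group.IsSolvable G :=
  Group.isSolvable_of_comm mul_comm'

theorem closure_pair_mul_mul_eq {x a b : G} (ha : a ∈ zpowers x) (hb : b ∈ zpowers x) (y : G) :
    closure {x, a * y * b} = closure {x, y} := by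
  have hx_le {z : G} : zpowers x ≤ closure {x, z} := zpowers_le.2 (subset_closure (.inl rfl))
  have hy_mem {z : G} : z ∈ closure {x, z} := subset_closure (.inr rfl)
  apply le_antisymm <;> rw [closure_le, Set.insert_subset_iff, Set.singleton_subset_iff] <;>
    refine ⟨subset_closure (.inl rfl), ?_⟩
  · exact mul_mem (mul_mem (hx_le ha) hy_mem) (hx_le hb)
  · simpa [mul_assoc] using
      mul_mem (mul_mem (hx_le (inv_mem ha)) (hy_mem (z := a * y * b))) (hx_le (inv_mem hb))

theorem mem_normalizer_zpowers_of_conj_mem [Finite G] {x y : G} (h : y * x * y⁻¹ ∈ zpowers x) :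
    y ∈ normalizer (zpowers x : Set G) := by
  refine mem_normalizer_fintype fun _ ⟨m, hm⟩ ↦ ?_
  rw [← hm, ← conj_zpow]
  exact zpow_mem h m

theorem isCyclic_closure_pair_quotient_zpowers (x y : G)
    [((zpowers x).subgroupOf (closure {x, y})).Normal] :
    IsCyclic (closure {x, y} ⧸ (zpowers x).subgroupOf (closure {x, y})) := by
  set K := closure {x, y}
  have hxK : x ∈ K := subset_closure (.inl rfl)
  have hyK : y ∈ K := subset_closure (.inr rfl)
  let q := QuotientGroup.mk' ((zpowers x).subgroupOf K)
  have hq : ∀ (g : G) (hg : g ∈ K), q ⟨g, hg⟩ ∈ zpowers (q ⟨y, hyK⟩) := by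
    intro g hg
    induction hg using closure_induction with
    | mem g hg =>
      rcases hg with rfl | rfl
      · have hq1 : q ⟨g, hxK⟩ = 1 :=
          (QuotientGroup.eq_one_iff _).2 (mem_subgroupOf.2 (mem_zpowers g))
        exact hq1 ▸ one_mem _
      · exact mem_zpowers _
    | one => exact one_mem _
    | mul g h _ _ hg hh => exact mul_mem hg hh
    | inv g _ hg => exact inv_mem hg
  refine isCyclic_iff_exists_zpowers_eq_top.2 ⟨q ⟨y, hyK⟩, eq_top_iff.2 fun z _ ↦ ?_⟩
  obtain ⟨⟨g, hg⟩, rfl⟩ := QuotientGroup.mk'_surjective _ z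
  exact hq g hg

theorem isSolvable_closure_pair_of_mem_normalizer {x y : G}
    (hy : y ∈ normalizer (zpowers x : Set G)) : Group.IsSolvable (closure {x, y}) := by
  have hKN : closure {x, y} ≤ normalizer (zpowers x : Set G) := by
    rw [closure_le, Set.insert_subset_iff, Set.singleton_subset_iff]
    exact ⟨le_normalizer (mem_zpowers x), hy⟩
  have := normal_subgroupOf_of_le_normalizer hKN
  have := (isCyclic_closure_pair_quotient_zpowers x y).isMulCommutative
  rw [Group.isSolvable_iff_subgroup_quotient ((zpowers x).subgroupOf (closure {x, y}))]
  exact ⟨isSolvable_of_isMulCommutative, isSolvable_of_isMulCommutative⟩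

def nonSolvableNeighbors (x : G) : Set G :=
  {y | ¬ Group.IsSolvable (closure {x, y})}

theorem mul_mul_mem_nonSolvableNeighbors {x y a b : G} (ha : a ∈ zpowers x)
    (hb : b ∈ zpowers x) (hy : y ∈ nonSolvableNeighbors x) :
    a * y * b ∈ nonSolvableNeighbors x := by
  rwa [nonSolvableNeighbors, Set.mem_ofPred_eq, closure_pair_mul_mul_eq ha hb]

end

/-- Let `G` be a finite group and `x ∉ Sol(G)`. Then the order of `x` is strictly
less than `deg(x)`, the number of `y ∈ G` with `⟨x, y⟩` not solvable. -/
theorem orderOf_lt_degree (G : Type*) [Group G] [Finite G] (x : G)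
    (hx : ¬ (∀ z : G, IsSolvable ↥(Subgroup.closure ({x, z} : Set G)))) :
    orderOf x < Nat.card {y : G | ¬ IsSolvable ↥(Subgroup.closure ({x, y} : Set G))} := by
  obtain ⟨y, hy⟩ : ∃ y, y ∈ nonSolvableNeighbors x := not_forall.1 hx
  set C := (· * y) '' (zpowers x : Set G)
  have hC : C ⊆ nonSolvableNeighbors x := by
    rintro _ ⟨a, ha, rfl⟩
    simpa using mul_mul_mem_nonSolvableNeighbors ha (one_mem _) hy
  have hCcard : C.ncard = orderOf x := by
    rw [Set.ncard_image_of_injective _ (mul_left_injective y), ← Nat.card_coe_set_eq,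
      SetLike.coe_sort_coe, Nat.card_zpowers]
  rw [Nat.card_coe_set_eq]
  refine (hCcard ▸ Set.ncard_le_ncard hC).lt_of_ne fun hcard ↦ hy ?_
  have hCeq : C = nonSolvableNeighbors x := Set.eq_of_subset_of_ncard_le hC (hcard ▸ hCcard.ge)
  obtain ⟨a, ha, hay⟩ : y * x ∈ C := by
    simpa [hCeq] using mul_mul_mem_nonSolvableNeighbors (one_mem _) (mem_zpowers x) hy
  refine isSolvable_closure_pair_of_mem_normalizer (mem_normalizer_zpowers_of_conj_mem ?_)
  rwa [← hay, mul_inv_cancel_right]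
end

section
/- Let G be a finite non-solvable group and let n = |G| - |Sol(G)| be the number of vertices of the induced non-solvable graph on G ∖ Sol(G). Then every x ∈ G with x ∉ Sol(G) satisfies deg(x) < n - 1; that is, the maximum degree of the induced graph is strictly less than n - 1. -/
/-!
`x` and every neighbour of `x` lie outside `Sol(G)`, so it suffices to find one more vertex
`y ≠ x` outside `Sol(G)` with `⟨x, y⟩` solvable. If `x² ≠ 1` take `y = x⁻¹`. If `x² = 1`,
`x` is not central (central elements lie in `Sol(G)`), so some conjugate `y ≠ x` exists; it
lies outside `Sol(G)` because `Sol(G)` is invariant under automorphisms, and `⟨x, y⟩` is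
solvable because two involutions generate a dihedral group.
-/

open Subgroup

theorem Subgroup.closure_insert_inv_le {G : Type*} [Group G] (x : G) (s : Set G) :
    closure (insert x⁻¹ s) ≤ closure (insert x s) :=
  (closure_le _).mpr <| Set.insert_subset_iff.mpr
    ⟨inv_mem (subset_closure (Set.mem_insert x s)), (Set.subset_insert x s).trans subset_closure⟩

theorem Subgroup.closure_insert_inv {G : Type*} [Group G] (x : G) (s : Set G) :
    closure (insert x⁻¹ s) = closure (insert x s) :=
  le_antisymm (closure_insert_inv_le x s) (by simpa using closure_insert_inv_le x⁻¹ s)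

theorem Set.ncard_lt_card_sub_ncard_sub_one {α : Type*} [Finite α] {D S : Set α} {a b : α}
    (hDS : Disjoint D S) (hab : a ≠ b) (ha : a ∉ D ∪ S) (hb : b ∉ D ∪ S) :
    D.ncard < Nat.card α - S.ncard - 1 := by
  have hcard : (insert a (insert b (D ∪ S))).ncard = D.ncard + S.ncard + 2 := by
    rw [ncard_insert_of_notMem (by simp [hab, ha]), ncard_insert_of_notMem hb,
      ncard_union_eq hDS]
  have := ncard_le_card (insert a (insert b (D ∪ S)))
  omega

namespace Group

theorem isSolvable_of_isMulCommutative (K : Type*) [Group K] [IsMulCommutative K] :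
    IsSolvable K :=
  isSolvable_of_comm Std.Commutative.comm

/-- `⟨a * b⟩` is normal, since both generators invert `a * b`, and the quotient is generated by
the common image of `a` and `b`. -/
theorem isSolvable_of_closure_pair_eq_top {K : Type*} [Group K] {a b : K} (ha : a * a = 1)
    (hb : b * b = 1) (hgen : closure {a, b} = ⊤) : IsSolvable K := by
  have ha' : a⁻¹ = a := inv_eq_of_mul_eq_one_right ha
  have hb' : b⁻¹ = b := inv_eq_of_mul_eq_one_right hb
  set N := zpowers (a * b)
  have hnorm : {a, b} ⊆ (normalizer (N : Set K) : Set K) := by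
    have key : ∀ c, c * (a * b) * c⁻¹ = (a * b)⁻¹ → c ∈ normalizer (N : Set K) := fun c hc => by
      rw [mem_normalizer_iff_map_conj_eq, MonoidHom.map_zpowers, ← zpowers_inv]
      exact congrArg zpowers (by rw [MonoidHom.coe_coe, MulAut.conj_apply, hc, inv_inv])
    rintro c (rfl | rfl) <;> apply key
    · rw [mul_inv_rev, ha', hb', ← mul_assoc, ha, one_mul]
    · rw [mul_inv_rev, ha', hb', mul_assoc, mul_assoc, hb, mul_one]
  have : N.Normal := normalizer_eq_top_iff.mp (eq_top_iff.mpr (hgen ▸ closure_le _ |>.mpr hnorm))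
  have hab : (a : K ⧸ N) = b := by
    rw [QuotientGroup.eq, ha']
    exact mem_zpowers _
  have : IsCyclic (K ⧸ N) := by
    refine isCyclic_iff_exists_zpowers_eq_top.mpr ⟨a, ?_⟩
    calc zpowers (a : K ⧸ N) = closure (QuotientGroup.mk' N '' {a, b}) := by
          rw [Set.image_pair, QuotientGroup.mk'_apply, QuotientGroup.mk'_apply, ← hab,
            Set.pair_eq_singleton, zpowers_eq_closure]
      _ = ⊤ := by
          rw [← MonoidHom.map_closure, hgen, map_top_of_surjective _ (QuotientGroup.mk'_surjective N)]
  exact (isSolvable_iff_subgroup_quotient N).mpr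
    ⟨isSolvable_of_isMulCommutative _, isSolvable_of_isMulCommutative _⟩

variable {G : Type*} [Group G]

theorem isSolvable_closure_pair_of_mul_self_eq_one {x y : G} (hx : x * x = 1) (hy : y * y = 1) :
    IsSolvable (closure {x, y}) := by
  refine isSolvable_of_closure_pair_eq_top (a := ⟨x, subset_closure (by simp)⟩)
    (b := ⟨y, subset_closure (by simp)⟩) (Subtype.ext hx) (Subtype.ext hy) ?_
  rw [← closure_closure_coe_preimage (k := {x, y})]
  congr 1
  ext ⟨g, _⟩
  simp [Subtype.ext_iff]

theorem isSolvable_closure_pair_of_commute {x y : G} (h : Commute x y) :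
    IsSolvable (closure {x, y}) :=
  have := isMulCommutative_closure (k := {x, y}) <| by
    rintro a (rfl | rfl) b (rfl | rfl) <;> first | rfl | exact h | exact h.symm
  isSolvable_of_isMulCommutative _

theorem isSolvable_closure_image {G' : Type*} [Group G'] (f : G →* G') {s : Set G}
    (h : IsSolvable (closure s)) : IsSolvable (closure (f '' s)) := by
  rw [← MonoidHom.map_closure]
  exact isSolvable_of_surjective (f.subgroupMap_surjective (closure s))

variable (G) in
def sol : Set G := {g | ∀ z : G, IsSolvable (closure {g, z})}

theorem center_subset_sol : (center G : Set G) ⊆ sol G := fun _ hx z =>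
  isSolvable_closure_pair_of_commute (mem_center_iff.mp hx z).symm

theorem inv_mem_sol_iff {x : G} : x⁻¹ ∈ sol G ↔ x ∈ sol G :=
  forall_congr' fun z => by rw [closure_insert_inv]

theorem map_mem_sol_of_mem_sol {G' : Type*} [Group G'] (f : G ≃* G') {x : G} (hx : x ∈ sol G) :
    f x ∈ sol G' := fun z => by
  have := isSolvable_closure_image f.toMonoidHom (hx (f.symm z))
  rwa [MulEquiv.coe_toMonoidHom, Set.image_pair, f.apply_symm_apply] at this

theorem map_mem_sol_iff {G' : Type*} [Group G'] (f : G ≃* G') {x : G} :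
    f x ∈ sol G' ↔ x ∈ sol G :=
  ⟨fun h => by simpa using map_mem_sol_of_mem_sol f.symm h, map_mem_sol_of_mem_sol f⟩

theorem isSolvable_closure_pair_of_right_mem_sol {x y : G} (hy : y ∈ sol G) :
    IsSolvable (closure {x, y}) :=
  Set.pair_comm x y ▸ hy x

theorem exists_ne_notMem_sol_isSolvable_closure_pair {x : G} (hx : x ∉ sol G) :
    ∃ y, y ≠ x ∧ y ∉ sol G ∧ IsSolvable (closure {x, y}) := by
  by_cases hx2 : x * x = 1
  · obtain ⟨c, hc⟩ : ∃ c, MulAut.conj c x ≠ x := by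
      by_contra! hcen
      refine hx (center_subset_sol (mem_center_iff.mpr fun c => ?_))
      simpa [mul_inv_eq_iff_eq_mul] using hcen c
    refine ⟨MulAut.conj c x, hc, (map_mem_sol_iff _).not.mpr hx,
      isSolvable_closure_pair_of_mul_self_eq_one hx2 ?_⟩
    rw [← map_mul, hx2, map_one]
  · refine ⟨x⁻¹, fun h => hx2 (mul_eq_one_iff_eq_inv.mpr h.symm), inv_mem_sol_iff.not.mpr hx,
      isSolvable_closure_pair_of_commute (Commute.refl x).inv_right⟩

end Group

theorem degree_lt_card_sub_one_general (G : Type*) [Group G] [Finite G]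
    (x : G)
    (hx : ¬ (∀ z : G, IsSolvable ↥(Subgroup.closure ({x, z} : Set G)))) :
    Nat.card {y : G | ¬ IsSolvable ↥(Subgroup.closure ({x, y} : Set G))} <
      (Nat.card G -
        Nat.card {g : G | ∀ z : G, IsSolvable ↥(Subgroup.closure ({g, z} : Set G))}) - 1 := by
  set D := {y : G | ¬ IsSolvable ↥(Subgroup.closure ({x, y} : Set G))}
  change x ∉ Group.sol G at hx
  change Nat.card D < Nat.card G - Nat.card (Group.sol G) - 1
  obtain ⟨y, hyx, hy, hxy⟩ := Group.exists_ne_notMem_sol_isSolvable_closure_pair hx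
  have hDS : Disjoint D (Group.sol G) :=
    Set.disjoint_left.mpr fun _ hD hS => hD (Group.isSolvable_closure_pair_of_right_mem_sol hS)
  have hxD : x ∉ D := fun h => h (Group.isSolvable_closure_pair_of_commute (Commute.refl x))
  rw [Nat.card_coe_set_eq, Nat.card_coe_set_eq]
  exact Set.ncard_lt_card_sub_ncard_sub_one hDS hyx.symm (by simp [hxD, hx])
    (by simpa [D] using ⟨hxy, hy⟩)

/-- Let `G` be a finite non-solvable group and `n = |G| - |Sol(G)|` the number of
vertices of the induced non-solvable graph on `G \ Sol(G)`. Then every vertex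
`x ∉ Sol(G)` has degree strictly less than `n - 1`. -/
theorem degree_lt_card_sub_one (G : Type*) [Group G] [Finite G]
    (hG : ¬ IsSolvable G) (x : G)
    (hx : ¬ (∀ z : G, IsSolvable ↥(Subgroup.closure ({x, z} : Set G)))) :
    Nat.card {y : G | ¬ IsSolvable ↥(Subgroup.closure ({x, y} : Set G))} <
      (Nat.card G -
        Nat.card {g : G | ∀ z : G, IsSolvable ↥(Subgroup.closure ({g, z} : Set G))}) - 1 :=
  degree_lt_card_sub_one_general G x hx
end
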